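/- Let 𝔤 be the 4-dimensional real Lie algebra with basis X₁, X₂, Y₁, Y₂ whose only nonvanishing brackets among basis elements are [X₁, X₂] = −X₂ + 2Y₁ + 4Y₂, [X₁, Y₁] = −Y₁, and [X₁, Y₂] = Y₁ + Y₂. Let Ω be the alternating bilinear form with Ω(X₁,Y₁) = Ω(X₂,Y₂) = 1 and Ω vanishing on all other pairs of distinct basis elements, and let j be the linear map with jX_i = Y_i and jY_i = −X_i (i = 1, 2). Then Ω is a nondegenerate 2-cocycle, j is a positive compatible complex structure, the span of the image of N^j equals span{X₁ + 2X₂, Y₁ + 2Y₂}, this span is involutive, its Ω-orthogonal complement equals span{2X₁ − X₂, 2Y₁ − Y₂}, and that complement is not involutive. -/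

import Mathlib

/-- The algebraic Nijenhuis tensor of a linear map `j` on a Lie algebra. -/
def algNijenhuis {𝔤 : Type*} [LieRing 𝔤] [LieAlgebra ℝ 𝔤] (j : 𝔤 →ₗ[ℝ] 𝔤) (X Y : 𝔤) : 𝔤 :=
  ⁅j X, j Y⁆ - j ⁅j X, Y⁆ - j ⁅X, j Y⁆ - ⁅X, Y⁆

/-- A subspace `W` of a Lie algebra is involutive if `⁅W, W⁆ ⊆ W`. -/
def IsInvolutive {𝔤 : Type*} [LieRing 𝔤] [LieAlgebra ℝ 𝔤] (W : Set 𝔤) : Prop :=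
  ∀ u ∈ W, ∀ v ∈ W, ⁅u, v⁆ ∈ W

/-!
In the coordinates of `b`, `Ω` and `j` are the standard symplectic form and complex structure,
so `Ω(X, jX)` is the sum of the squares of the coordinates of `X`; positivity gives nondegeneracy, and compatibility and `j² = -1` are
coordinate identities. The Lie algebra is `ℝ X₁ ⋉ ℝ³`, so `⁅X, Y⁆` depends only on the minors
`xᵢ yₖ - xₖ yᵢ` with `i = 0`; expanding `N^j(X, Y)` the same way writes it as an explicit
combination of `u = X₁ + 2X₂` and `v = Y₁ + 2Y₂`, and `N^j(X₁, X₂)`, `N^j(X₁, Y₂)` already span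
`⟨u, v⟩`. A two-dimensional subspace `⟨p, q⟩` is involutive iff `⁅p, q⁆ ∈ ⟨p, q⟩`: here
`⁅u, v⁆ = v`, while `⁅2X₁ - X₂, 2Y₁ - Y₂⁆ = -6Y₁ - 2Y₂` leaves the complement.
-/

open Module Submodule

theorem LinearMap.separatingLeft_of_pos {R M : Type*} [CommSemiring R] [Preorder R]
    [AddCommMonoid M] [Module R M] (B : M →ₗ[R] M →ₗ[R] R) (J : M → M)
    (hpos : ∀ X, X ≠ 0 → 0 < B X (J X)) : B.SeparatingLeft := fun X hX => by
  by_contra hne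
  exact (hpos X hne).ne' (hX (J X))

theorem forall_mem_span_pair_apply_eq_zero_iff {R M N : Type*} [CommSemiring R]
    [AddCommMonoid M] [Module R M] [AddCommMonoid N] [Module R N] (B : M →ₗ[R] N →ₗ[R] R)
    (u v : M) (x : N) : (∀ w ∈ span R {u, v}, B w x = 0) ↔ B u x = 0 ∧ B v x = 0 := by
  change span R {u, v} ≤ LinearMap.ker (B.flip x) ↔ _
  rw [span_le, Set.insert_subset_iff, Set.singleton_subset_iff]
  rfl

theorem isInvolutive_span_pair_iff {𝔤 : Type*} [LieRing 𝔤] [LieAlgebra ℝ 𝔤] (u v : 𝔤) :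
    IsInvolutive (span ℝ {u, v} : Set 𝔤) ↔ ⁅u, v⁆ ∈ span ℝ {u, v} := by
  refine ⟨fun h => h u (subset_span (by simp)) v (subset_span (by simp)), fun huv => ?_⟩
  intro x hx y hy
  obtain ⟨a, c, rfl⟩ := mem_span_pair.1 hx
  obtain ⟨a', c', rfl⟩ := mem_span_pair.1 hy
  have hexp : ⁅a • u + c • v, a' • u + c' • v⁆ = (a * c' - c * a') • ⁅u, v⁆ := by
    simp only [add_lie, lie_add, smul_lie, lie_smul, lie_self, ← lie_skew v u]
    module
  exact hexp ▸ smul_mem _ _ huv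

namespace Module.Basis

theorem sum_repr_fin_four {R M : Type*} [Semiring R] [AddCommMonoid M] [Module R M]
    (b : Basis (Fin 4) R M) (X : M) :
    b.repr X 0 • b 0 + b.repr X 1 • b 1 + b.repr X 2 • b 2 + b.repr X 3 • b 3 = X := by
  conv_rhs => rw [← b.sum_repr X, Fin.sum_univ_four]

noncomputable def wedgeCoord {ι R M : Type*} [CommRing R] [AddCommGroup M] [Module R M]
    (b : Basis ι R M) (X Y : M) (i k : ι) : R :=
  b.repr X i * b.repr Y k - b.repr X k * b.repr Y i

variable {V : Type*} [AddCommGroup V] [Module ℝ V] (b : Basis (Fin 4) ℝ V)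

noncomputable def stdSymplectic : V →ₗ[ℝ] V →ₗ[ℝ] ℝ :=
  Matrix.toLinearMap₂ b b !![0,0,1,0; 0,0,0,1; -1,0,0,0; 0,-1,0,0]

noncomputable def stdComplex : V →ₗ[ℝ] V :=
  b.constr ℝ ![b 2, b 3, -b 0, -b 1]

theorem stdSymplectic_apply (X Y : V) :
    b.stdSymplectic X Y = b.repr X 0 * b.repr Y 2 + b.repr X 1 * b.repr Y 3
      - b.repr X 2 * b.repr Y 0 - b.repr X 3 * b.repr Y 1 := by
  simp only [stdSymplectic, Matrix.toLinearMap₂_apply, Fin.sum_univ_four, Matrix.of_apply,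
    Matrix.cons_val', Matrix.cons_val_fin_one, Matrix.cons_val_zero, Matrix.cons_val_one,
    Matrix.cons_val, smul_eq_mul]
  ring

theorem stdComplex_basis (i : Fin 4) : b.stdComplex (b i) = ![b 2, b 3, -b 0, -b 1] i :=
  b.constr_basis ℝ _ i

theorem stdComplex_apply (X : V) :
    b.stdComplex X = (-b.repr X 2) • b 0 + (-b.repr X 3) • b 1 + b.repr X 0 • b 2
      + b.repr X 1 • b 3 := by
  rw [stdComplex, b.constr_apply, Finsupp.sum_fintype _ _ (by simp), Fin.sum_univ_four]
  simp only [Matrix.cons_val_zero, Matrix.cons_val_one, Matrix.cons_val, smul_neg]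
  module

theorem repr_stdComplex (X : V) (i : Fin 4) :
    b.repr (b.stdComplex X) i = ![-b.repr X 2, -b.repr X 3, b.repr X 0, b.repr X 1] i := by
  rw [stdComplex_apply]
  fin_cases i <;> simp

theorem stdComplex_stdComplex (X : V) : b.stdComplex (b.stdComplex X) = -X := by
  have : b.stdComplex ∘ₗ b.stdComplex = -LinearMap.id :=
    b.ext fun i => by fin_cases i <;> simp [stdComplex_basis]
  exact LinearMap.congr_fun this X

theorem stdSymplectic_stdComplex_stdComplex (X Y : V) :
    b.stdSymplectic (b.stdComplex X) (b.stdComplex Y) = b.stdSymplectic X Y := by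
  simp only [stdSymplectic_apply, repr_stdComplex, Matrix.cons_val_zero, Matrix.cons_val_one,
    Matrix.cons_val]
  ring

theorem stdSymplectic_self_stdComplex (X : V) :
    b.stdSymplectic X (b.stdComplex X) = ∑ i, b.repr X i ^ 2 := by
  simp only [stdSymplectic_apply, repr_stdComplex, Fin.sum_univ_four, Matrix.cons_val_zero,
    Matrix.cons_val_one, Matrix.cons_val]
  ring

theorem stdSymplectic_self_stdComplex_pos {X : V} (hX : X ≠ 0) :
    0 < b.stdSymplectic X (b.stdComplex X) := by
  obtain ⟨i, hi⟩ : ∃ i, b.repr X i ≠ 0 := by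
    by_contra! h
    exact hX (b.ext_elem fun i => by simpa using h i)
  rw [stdSymplectic_self_stdComplex]
  exact Finset.sum_pos' (fun i _ => sq_nonneg _) ⟨i, Finset.mem_univ i, by positivity⟩

theorem stdSymplectic_orthogonal_span :
    {x : V | ∀ w ∈ span ℝ ({b 0 + (2 : ℝ) • b 1, b 2 + (2 : ℝ) • b 3} : Set V),
        b.stdSymplectic w x = 0} =
      (span ℝ ({(2 : ℝ) • b 0 - b 1, (2 : ℝ) • b 2 - b 3} : Set V) : Set V) := by
  ext x
  change (∀ w ∈ _, _) ↔ x ∈ span ℝ _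
  rw [forall_mem_span_pair_apply_eq_zero_iff, mem_span_pair]
  simp only [map_add, map_smul, LinearMap.add_apply, LinearMap.smul_apply, stdSymplectic_apply,
    Basis.repr_self_apply, Fin.reduceEq, ↓reduceIte, smul_eq_mul]
  constructor
  · rintro ⟨h1, h2⟩
    refine ⟨-b.repr x 1, -b.repr x 3, b.ext_elem fun i => ?_⟩
    fin_cases i <;> simp <;> linarith
  · rintro ⟨a, c, rfl⟩
    simp only [map_add, map_sub, map_smul, Finsupp.add_apply, Finsupp.sub_apply,
      Finsupp.smul_apply, Basis.repr_self_apply, Fin.reduceEq, ↓reduceIte, smul_eq_mul]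
    constructor <;> ring

end Module.Basis

section Example

variable {𝔤 : Type*} [LieRing 𝔤] [LieAlgebra ℝ 𝔤] (b : Basis (Fin 4) ℝ 𝔤)

/-- The brackets of the example in the basis `b = (X₁, X₂, Y₁, Y₂)`. -/
def IsExample4Basis : Prop :=
  ∀ i k : Fin 4, ⁅b i, b k⁆ =
      if i = 0 ∧ k = 1 then -(b 1) + (2 : ℝ) • b 2 + (4 : ℝ) • b 3 else
      if i = 1 ∧ k = 0 then -(-(b 1) + (2 : ℝ) • b 2 + (4 : ℝ) • b 3) else
      if i = 0 ∧ k = 2 then -(b 2) else if i = 2 ∧ k = 0 then b 2 else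
      if i = 0 ∧ k = 3 then b 2 + b 3 else if i = 3 ∧ k = 0 then -(b 2 + b 3) else 0

variable {b}

theorem IsExample4Basis.lie_eq (h : IsExample4Basis b) (X Y : 𝔤) :
    ⁅X, Y⁆ = (-b.wedgeCoord X Y 0 1) • b 1
      + (2 * b.wedgeCoord X Y 0 1 - b.wedgeCoord X Y 0 2 + b.wedgeCoord X Y 0 3) • b 2
      + (4 * b.wedgeCoord X Y 0 1 + b.wedgeCoord X Y 0 3) • b 3 := by
  conv_lhs => rw [← b.sum_repr_fin_four X, ← b.sum_repr_fin_four Y]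
  simp only [add_lie, lie_add, smul_lie, lie_smul, h _ _, Fin.reduceEq, and_true, and_false,
    ↓reduceIte, Basis.wedgeCoord]
  module

theorem IsExample4Basis.stdSymplectic_cocycle (h : IsExample4Basis b) (X Y Z : 𝔤) :
    b.stdSymplectic ⁅X, Y⁆ Z + b.stdSymplectic ⁅Y, Z⁆ X + b.stdSymplectic ⁅Z, X⁆ Y = 0 := by
  simp only [h.lie_eq, LinearMap.add_apply, LinearMap.smul_apply, Basis.stdSymplectic_apply,
    Basis.wedgeCoord, map_add, map_smul, Basis.repr_self_apply, Fin.reduceEq, ↓reduceIte,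
    smul_eq_mul]
  ring

theorem IsExample4Basis.algNijenhuis_eq (h : IsExample4Basis b) (X Y : 𝔤) :
    algNijenhuis b.stdComplex X Y =
      (b.wedgeCoord X Y 0 1 - 2 * b.wedgeCoord X Y 0 3 + 2 * b.wedgeCoord X Y 1 2
          - b.wedgeCoord X Y 2 3) • (b 0 + (2 : ℝ) • b 1)
      + (-2 * b.wedgeCoord X Y 0 1 - b.wedgeCoord X Y 0 3 + b.wedgeCoord X Y 1 2
          + 2 * b.wedgeCoord X Y 2 3) • (b 2 + (2 : ℝ) • b 3) := by
  simp only [algNijenhuis, h.lie_eq, map_add, map_smul, Basis.stdComplex_basis,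
    Basis.repr_stdComplex, Basis.wedgeCoord, Matrix.cons_val_zero, Matrix.cons_val_one,
    Matrix.cons_val]
  module

theorem IsExample4Basis.span_algNijenhuis (h : IsExample4Basis b) :
    span ℝ {v : 𝔤 | ∃ X Y : 𝔤, v = algNijenhuis b.stdComplex X Y} =
      span ℝ {b 0 + (2 : ℝ) • b 1, b 2 + (2 : ℝ) • b 3} := by
  set N := span ℝ {v : 𝔤 | ∃ X Y : 𝔤, v = algNijenhuis b.stdComplex X Y}
  apply le_antisymm
  · rw [span_le]
    rintro _ ⟨X, Y, rfl⟩
    rw [SetLike.mem_coe, h.algNijenhuis_eq]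
    exact add_mem (smul_mem _ _ (subset_span (by simp))) (smul_mem _ _ (subset_span (by simp)))
  · have hN : ∀ X Y, algNijenhuis b.stdComplex X Y ∈ N := fun X Y => subset_span ⟨X, Y, rfl⟩
    have hu : (5 : ℝ) • (b 0 + (2 : ℝ) • b 1) = algNijenhuis b.stdComplex (b 0) (b 1)
        - (2 : ℝ) • algNijenhuis b.stdComplex (b 0) (b 3) := by
      simp only [h.algNijenhuis_eq, Basis.wedgeCoord, Basis.repr_self_apply, Fin.reduceEq,
        ↓reduceIte]
      module
    have hv : (5 : ℝ) • (b 2 + (2 : ℝ) • b 3) = -(2 : ℝ) • algNijenhuis b.stdComplex (b 0) (b 1)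
        - algNijenhuis b.stdComplex (b 0) (b 3) := by
      simp only [h.algNijenhuis_eq, Basis.wedgeCoord, Basis.repr_self_apply, Fin.reduceEq,
        ↓reduceIte]
      module
    have h5 : (5 : ℝ) ≠ 0 := by norm_num
    rw [span_le, Set.insert_subset_iff, Set.singleton_subset_iff]
    exact ⟨(smul_mem_iff N h5).1 (hu ▸ sub_mem (hN _ _) (smul_mem _ _ (hN _ _))),
      (smul_mem_iff N h5).1 (hv ▸ sub_mem (smul_mem _ _ (hN _ _)) (hN _ _))⟩

theorem IsExample4Basis.isInvolutive (h : IsExample4Basis b) :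
    IsInvolutive (span ℝ ({b 0 + (2 : ℝ) • b 1, b 2 + (2 : ℝ) • b 3} : Set 𝔤) : Set 𝔤) := by
  have hbr : ⁅b 0 + (2 : ℝ) • b 1, b 2 + (2 : ℝ) • b 3⁆ = b 2 + (2 : ℝ) • b 3 := by
    simp only [h.lie_eq, Basis.wedgeCoord, map_add, map_smul, Finsupp.add_apply,
      Finsupp.smul_apply, Basis.repr_self_apply, Fin.reduceEq, ↓reduceIte, smul_eq_mul]
    module
  rw [isInvolutive_span_pair_iff, hbr]
  exact subset_span (by simp)

theorem IsExample4Basis.not_isInvolutive (h : IsExample4Basis b) :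
    ¬ IsInvolutive (span ℝ ({(2 : ℝ) • b 0 - b 1, (2 : ℝ) • b 2 - b 3} : Set 𝔤) : Set 𝔤) := by
  have hbr : ⁅(2 : ℝ) • b 0 - b 1, (2 : ℝ) • b 2 - b 3⁆ = (-6 : ℝ) • b 2 + (-2 : ℝ) • b 3 := by
    simp only [h.lie_eq, Basis.wedgeCoord, map_sub, map_smul, Finsupp.sub_apply,
      Finsupp.smul_apply, Basis.repr_self_apply, Fin.reduceEq, ↓reduceIte, smul_eq_mul]
    module
  rw [isInvolutive_span_pair_iff, hbr, mem_span_pair]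
  rintro ⟨a, c, hac⟩
  have h2 := congr_arg (b.repr · 2) hac
  have h3 := congr_arg (b.repr · 3) hac
  simp only [map_add, map_sub, map_smul, Finsupp.add_apply, Finsupp.sub_apply,
    Finsupp.smul_apply, Basis.repr_self_apply, Fin.reduceEq, ↓reduceIte, smul_eq_mul] at h2 h3
  linarith

end Example

theorem stmt_11 (𝔤 : Type*) [LieRing 𝔤] [LieAlgebra ℝ 𝔤]
    (b : Module.Basis (Fin 4) ℝ 𝔤)
    (hbr : ∀ i k : Fin 4, ⁅b i, b k⁆ =
      if i = 0 ∧ k = 1 then -(b 1) + (2 : ℝ) • b 2 + (4 : ℝ) • b 3 else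
      if i = 1 ∧ k = 0 then -(-(b 1) + (2 : ℝ) • b 2 + (4 : ℝ) • b 3) else
      if i = 0 ∧ k = 2 then -(b 2) else if i = 2 ∧ k = 0 then b 2 else
      if i = 0 ∧ k = 3 then b 2 + b 3 else if i = 3 ∧ k = 0 then -(b 2 + b 3) else 0)
    (Ω : 𝔤 →ₗ[ℝ] 𝔤 →ₗ[ℝ] ℝ)
    (hΩ : ∀ i k : Fin 4, Ω (b i) (b k) =
      !![0,0,1,0; 0,0,0,1; -1,0,0,0; 0,-1,0,0] i k)
    (j : 𝔤 →ₗ[ℝ] 𝔤)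
    (hj0 : j (b 0) = b 2) (hj1 : j (b 1) = b 3)
    (hj2 : j (b 2) = -(b 0)) (hj3 : j (b 3) = -(b 1)) :
    (∀ X : 𝔤, (∀ Y : 𝔤, Ω X Y = 0) → X = 0) ∧
    (∀ X Y Z : 𝔤, Ω ⁅X, Y⁆ Z + Ω ⁅Y, Z⁆ X + Ω ⁅Z, X⁆ Y = 0) ∧
    (∀ X : 𝔤, j (j X) = -X) ∧
    (∀ X Y : 𝔤, Ω (j X) (j Y) = Ω X Y) ∧
    (∀ X : 𝔤, X ≠ 0 → 0 < Ω X (j X)) ∧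
    Submodule.span ℝ {v : 𝔤 | ∃ X Y : 𝔤, v = algNijenhuis j X Y} =
      Submodule.span ℝ {b 0 + (2 : ℝ) • b 1, b 2 + (2 : ℝ) • b 3} ∧
    IsInvolutive
      (↑(Submodule.span ℝ ({b 0 + (2 : ℝ) • b 1, b 2 + (2 : ℝ) • b 3} : Set 𝔤)) : Set 𝔤) ∧
    {x : 𝔤 | ∀ w ∈ Submodule.span ℝ ({b 0 + (2 : ℝ) • b 1, b 2 + (2 : ℝ) • b 3} : Set 𝔤),
        Ω w x = 0} =
      (↑(Submodule.span ℝ ({(2 : ℝ) • b 0 - b 1, (2 : ℝ) • b 2 - b 3} : Set 𝔤)) : Set 𝔤) ∧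
    ¬ IsInvolutive
      (↑(Submodule.span ℝ ({(2 : ℝ) • b 0 - b 1, (2 : ℝ) • b 2 - b 3} : Set 𝔤)) : Set 𝔤) := by
  have hb : IsExample4Basis b := hbr
  obtain rfl : Ω = b.stdSymplectic := LinearMap.ext_basis b b fun i k => by
    rw [hΩ, Basis.stdSymplectic, Matrix.toLinearMap₂_apply_basis]
  obtain rfl : j = b.stdComplex := b.ext fun i => by
    fin_cases i <;> simp [Basis.stdComplex_basis, hj0, hj1, hj2, hj3]
  exact ⟨b.stdSymplectic.separatingLeft_of_pos b.stdComplex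
      fun _ => b.stdSymplectic_self_stdComplex_pos,
    hb.stdSymplectic_cocycle, b.stdComplex_stdComplex, b.stdSymplectic_stdComplex_stdComplex,
    fun _ => b.stdSymplectic_self_stdComplex_pos, hb.span_algNijenhuis, hb.isInvolutive,
    b.stdSymplectic_orthogonal_span, hb.not_isInvolutive⟩
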